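/- Let $(d_n)$ be a sequence of positive integers, $(h_n)$ a sequence with $h_n = \frac{c_1}{n^2}\left(\frac{\sin(2\pi (d_n/2+1)/n)}{2(\cosh(4/n)-1) + 2(1 - \cos(2\pi (d_n/2+1)/n))}\right)^2$ for a constant $c_1 > 0$. If $d_n \to \infty$ and $d_n/n \to 0$, then there exists a constant $k_1 > 0$ such that $h_n \ge k_1 d_n^{-2}$ for all sufficiently large $n$. -/

import Mathlib

open Filter Real

lemma cosh_sub_one_le_sq {x : ℝ} (hx : |x| ≤ 1) : Real.cosh x - 1 ≤ x ^ 2 := by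
  have h1 := Real.exp_bound hx (by norm_num : 0 < 2)
  have h2 := Real.exp_bound (x := -x) (by rwa [abs_neg]) (by norm_num : 0 < 2)
  simp [Finset.sum_range_succ, abs_le, abs_neg, sq_abs] at h1 h2
  rw [Real.cosh_eq]
  nlinarith [h1.1, h1.2, h2.1, h2.2]

set_option maxHeartbeats 1000000 in
/-- For the exponential-trend example, with
`h_n = (c₁/n²) (sin(2π(dₙ/2+1)/n) / (2(cosh(4/n)-1) + 2(1 - cos(2π(dₙ/2+1)/n))))²`,
if `dₙ → ∞` and `dₙ/n → 0` then there is `k₁ > 0` with `hₙ ≥ k₁ dₙ⁻²` for all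
sufficiently large `n`. -/
theorem stmt18 (d : ℕ → ℕ) (c₁ : ℝ) (hc₁ : 0 < c₁)
    (h : ℕ → ℝ)
    (hdef : ∀ n : ℕ, h n = c₁ / (n : ℝ) ^ 2 *
      (Real.sin (2 * π * ((d n : ℝ) / 2 + 1) / n) /
        (2 * (Real.cosh (4 / (n : ℝ)) - 1)
          + 2 * (1 - Real.cos (2 * π * ((d n : ℝ) / 2 + 1) / n)))) ^ 2)
    (hdtop : Tendsto (fun n : ℕ => (d n : ℝ)) atTop atTop)
    (hratio : Tendsto (fun n : ℕ => (d n : ℝ) / n) atTop (nhds 0)) :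
    ∃ k₁ : ℝ, 0 < k₁ ∧ ∀ᶠ n : ℕ in atTop, k₁ * ((d n : ℝ) ^ 2)⁻¹ ≤ h n := by
  have hπ : (0:ℝ) < π := Real.pi_pos
  refine ⟨c₁ / 640, by positivity, ?_⟩
  -- eventual smallness of θ
  have htheta : Tendsto (fun n : ℕ => π * ((d n : ℝ) + 2) / n) atTop (nhds 0) := by
    have h2 : Tendsto (fun n : ℕ => (2:ℝ) / n) atTop (nhds 0) :=
      tendsto_const_div_atTop_nhds_zero_nat 2
    have := (hratio.add h2).const_mul π
    simpa [mul_add, mul_div_assoc, add_div] using this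
  have hA : ∀ᶠ n : ℕ in atTop, π * ((d n : ℝ) + 2) / n ≤ 1 :=
    htheta.eventually_le_const (by norm_num : (0:ℝ) < 1)
  have hB : ∀ᶠ n : ℕ in atTop, (2:ℝ) ≤ (d n : ℝ) := hdtop.eventually_ge_atTop 2
  filter_upwards [hA, hB, eventually_ge_atTop 4] with n hθ1 hd2 hn4
  have hn0 : (0:ℝ) < n := by positivity
  set θ : ℝ := π * ((d n : ℝ) + 2) / n with hθdef
  have harg : 2 * π * ((d n : ℝ) / 2 + 1) / n = θ := by rw [hθdef]; ring
  have hθpos : 0 < θ := by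
    rw [hθdef]
    apply div_pos _ hn0
    positivity
  clear_value θ
  -- sin θ ≥ θ/2
  have hsin : θ / 2 ≤ Real.sin θ := by
    have h1 := Real.sin_gt_sub_cube hθpos
    have hsq1 : θ ^ 2 ≤ 1 := by nlinarith
    have hcube : θ ^ 3 ≤ θ := by nlinarith [mul_le_mul_of_nonneg_left hsq1 hθpos.le]
    linarith
  -- 1 - cos θ ≤ θ²/2
  have hcos : 1 - Real.cos θ ≤ θ ^ 2 / 2 := by
    have := Real.one_sub_sq_div_two_le_cos (x := θ)
    linarith
  -- cosh(4/n) - 1 ≤ 16/n²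
  have hcosh : Real.cosh (4 / (n:ℝ)) - 1 ≤ 16 / (n:ℝ) ^ 2 := by
    have habs : |4 / (n:ℝ)| ≤ 1 := by
      rw [abs_of_pos (by positivity)]
      rw [div_le_one hn0]
      exact_mod_cast hn4
    have := cosh_sub_one_le_sq habs
    calc Real.cosh (4 / (n:ℝ)) - 1 ≤ (4 / (n:ℝ)) ^ 2 := this
      _ = 16 / (n:ℝ) ^ 2 := by ring
  -- n² θ² = π² (d+2)²
  have hnθ : (n:ℝ) ^ 2 * θ ^ 2 = π ^ 2 * ((d n : ℝ) + 2) ^ 2 := by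
    rw [hθdef]
    field_simp
  -- 32/n² ≤ θ² (since nθ = π(d+2) ≥ 2π, (nθ)² ≥ 4π² ≥ 36)
  have hsmall : 32 / (n:ℝ) ^ 2 ≤ θ ^ 2 := by
    rw [div_le_iff₀ (by positivity), mul_comm]
    rw [hnθ]
    have h9 : (9:ℝ) ≤ π ^ 2 := by nlinarith [Real.pi_gt_three]
    have h16 : (16:ℝ) ≤ ((d n : ℝ) + 2) ^ 2 := by nlinarith
    calc (32:ℝ) ≤ 9 * 16 := by norm_num
      _ ≤ π ^ 2 * ((d n : ℝ) + 2) ^ 2 := mul_le_mul h9 h16 (by norm_num) (by positivity)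
  set D : ℝ := 2 * (Real.cosh (4 / (n:ℝ)) - 1) + 2 * (1 - Real.cos θ) with hDdef
  clear_value D
  have hDle : D ≤ 2 * θ ^ 2 := by
    have : 2 * (16 / (n:ℝ) ^ 2) + θ ^ 2 ≤ 2 * θ ^ 2 := by
      have : 2 * (16 / (n:ℝ) ^ 2) = 32 / (n:ℝ) ^ 2 := by ring
      linarith [hsmall]
    linarith [hcosh, hcos]
  have hDpos : 0 < D := by
    have h1 := Real.one_le_cosh (4 / (n:ℝ))
    have h2 := Real.sin_sq_add_cos_sq θ
    have h3 := Real.cos_le_one θ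
    nlinarith [hsin, hθpos]
  -- ratio bound
  have hratio' : 1 / (4 * θ) ≤ Real.sin θ / D := by
    rw [div_le_div_iff₀ (by positivity) hDpos]
    nlinarith [hsin, hDle, hθpos]
  have hsq : 1 / (16 * θ ^ 2) ≤ (Real.sin θ / D) ^ 2 := by
    have h0 : 0 < 1 / (4 * θ) := by positivity
    calc 1 / (16 * θ ^ 2) = (1 / (4 * θ)) ^ 2 := by ring
      _ ≤ (Real.sin θ / D) ^ 2 := by
          apply pow_le_pow_left₀ h0.le hratio'
  rw [hdef n, harg, ← hDdef]
  have hπ2 : π ^ 2 ≤ 10 := by nlinarith [Real.pi_lt_d2, Real.pi_pos, Real.pi_gt_three]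
  have hdd : ((d n : ℝ) + 2) ^ 2 ≤ 4 * (d n : ℝ) ^ 2 := by nlinarith
  have key : π ^ 2 * ((d n : ℝ) + 2) ^ 2 ≤ 10 * (4 * (d n : ℝ) ^ 2) :=
    mul_le_mul hπ2 hdd (by positivity) (by norm_num)
  have hkey : (n:ℝ) ^ 2 * (16 * θ ^ 2) ≤ 640 * (d n : ℝ) ^ 2 := by
    calc (n:ℝ) ^ 2 * (16 * θ ^ 2) = 16 * ((n:ℝ) ^ 2 * θ ^ 2) := by ring
      _ = 16 * (π ^ 2 * ((d n : ℝ) + 2) ^ 2) := by rw [hnθ]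
      _ ≤ 16 * (10 * (4 * (d n : ℝ) ^ 2)) := by linarith
      _ = 640 * (d n : ℝ) ^ 2 := by ring
  have hd0 : (0:ℝ) < (d n : ℝ) := by linarith
  calc c₁ / 640 * (((d n : ℝ)) ^ 2)⁻¹
      = c₁ / (640 * (d n : ℝ) ^ 2) := by ring
    _ ≤ c₁ / ((n:ℝ) ^ 2 * (16 * θ ^ 2)) := by
        rw [div_le_div_iff₀ (by positivity) (by positivity)]
        exact mul_le_mul_of_nonneg_left hkey hc₁.le
    _ = c₁ / (n:ℝ) ^ 2 * (1 / (16 * θ ^ 2)) := by ring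
    _ ≤ c₁ / (n:ℝ) ^ 2 * (Real.sin θ / D) ^ 2 :=
        mul_le_mul_of_nonneg_left hsq (by positivity)
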